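/- arXiv:1405.1130 — 2 statements merged into one kernel-verified Lean document; each statement's English description precedes it below -/
import Mathlib

section
/- Let X be a normed linear space and f : X → ℝ ∪ {+∞} a convex function. Then for every x ∈ X with f(x) < +∞, the local slope equals the subdifferential slope: |∇f|(x) = |∂f|(x). -/
open Filter Metric Topology ENNReal

/-- The "positive part" of an extended real, as an element of `ℝ≥0∞`. -/
noncomputable def ePlus (a : EReal) : ℝ≥0∞ := if a = ⊤ then ⊤ else ENNReal.ofReal a.toReal

variable {X : Type*} [NormedAddCommGroup X] [NormedSpace ℝ X]

/-- The local slope `|∇f|(x) := limsup_{u→x, u≠x} [f(x) − f(u)]₊ / ‖u − x‖`. -/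
noncomputable def locSlope (f : X → EReal) (x : X) : ℝ≥0∞ :=
  Filter.limsup (fun u => ePlus (f x - f u) / ENNReal.ofReal ‖u - x‖) (𝓝[≠] x)

/-- The Fréchet subdifferential of `f` at `x` (empty when `f(x) = +∞`);
the defining liminf inequality is expressed in the equivalent ε-form. -/
def frSubdiff (f : X → EReal) (x : X) : Set (X →L[ℝ] ℝ) :=
  {p | f x ≠ ⊤ ∧ ∀ ε : ℝ, 0 < ε →
    ∀ᶠ u in 𝓝[≠] x, f x + ((p (u - x) - ε * ‖u - x‖ : ℝ) : EReal) ≤ f u}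

/-- The subdifferential slope `|∂f|(x) := inf {‖x*‖ : x* ∈ ∂f(x)}` (`inf ∅ = +∞`). -/
noncomputable def sdSlope (f : X → EReal) (x : X) : ℝ≥0∞ :=
  ⨅ (p : X →L[ℝ] ℝ) (_ : p ∈ frSubdiff f x), (‖p‖₊ : ℝ≥0∞)

/-!
Proof idea. If `p` is a subgradient, then `f x - f u ≤ (‖p‖ + ε) ‖u - x‖` near `x`, so
`|∇f|(x) ≤ ‖p‖`. Conversely, if `|∇f|(x) < r`, then `f u ≥ f x - r ‖u - x‖` near `x`, and
convexity propagates this bound to all `u`. The convex function `w ↦ f (x + w) - f x` then lies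
above the concave function `-r ‖w‖`, and a Hahn–Banach sandwich argument yields a linear `p` in
between; `p ≥ -r ‖·‖` forces `‖p‖ ≤ r`, and `p ≤ f (x + ·) - f x` makes `p` a subgradient.
-/

open NNReal Set Pointwise

section ConvexOn

variable {s : Set X} {φ : X → ℝ}

theorem ConvexOn.map_smul_le (hφ : ConvexOn ℝ s φ) (h0 : (0 : X) ∈ s) (hφ0 : φ 0 = 0)
    {y : X} (hy : y ∈ s) {a : ℝ} (ha : a ∈ Icc (0 : ℝ) 1) : φ (a • y) ≤ a * φ y := by
  simpa [hφ0] using hφ.2 hy h0 ha.1 (sub_nonneg.2 ha.2) (add_sub_cancel a 1)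

theorem ConvexOn.smul_mem_and_map_smul_div_le (hφ : ConvexOn ℝ s φ) (h0 : (0 : X) ∈ s)
    (hφ0 : φ 0 = 0) {w : X} {a b : ℝ} (ha : 0 < a) (hab : a ≤ b) (hb : b • w ∈ s) :
    a • w ∈ s ∧ φ (a • w) / a ≤ φ (b • w) / b := by
  have hb0 : 0 < b := ha.trans_le hab
  have hab' : a / b ∈ Icc (0 : ℝ) 1 := ⟨(div_pos ha hb0).le, (div_le_one hb0).2 hab⟩
  have hw : a • w = (a / b) • b • w := by rw [smul_smul, div_mul_cancel₀ _ hb0.ne']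
  refine ⟨hw ▸ hφ.1.smul_mem_of_zero_mem h0 hb hab', ?_⟩
  rw [div_le_div_iff₀ ha hb0]
  calc φ (a • w) * b ≤ a / b * φ (b • w) * b := by
        gcongr; exact hw ▸ hφ.map_smul_le h0 hφ0 hb hab'
    _ = φ (b • w) * a := by field_simp

/-- Compare `φ u` with `φ` at the points `x + t • (u - x)` as `t → 0+`. -/
theorem ConvexOn.sub_mul_norm_le_of_eventually (hφ : ConvexOn ℝ s φ) {x : X} (hx : x ∈ s)
    {r : ℝ} (hloc : ∀ᶠ u in 𝓝 x, u ∈ s → φ x - r * ‖u - x‖ ≤ φ u) {u : X} (hu : u ∈ s) :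
    φ x - r * ‖u - x‖ ≤ φ u := by
  have hlim : Tendsto (fun t : ℝ => x + t • (u - x)) (𝓝[>] 0) (𝓝 x) := by
    have : Tendsto (fun t : ℝ => x + t • (u - x)) (𝓝 0) (𝓝 (x + (0 : ℝ) • (u - x))) :=
      (continuous_const.add (continuous_id.smul continuous_const)).tendsto 0
    simpa using this.mono_left nhdsWithin_le_nhds
  obtain ⟨t, ht_loc, ht0, ht1⟩ := ((hlim.eventually hloc).and (Ioo_mem_nhdsGT one_pos)).exists
  have hseg : x + t • (u - x) = (1 - t) • x + t • u := by module
  have hconv := hφ.2 hx hu (sub_nonneg.2 ht1.le) ht0.le (sub_add_cancel 1 t)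
  have hloc_t := ht_loc (hseg ▸ hφ.1 hx hu (sub_nonneg.2 ht1.le) ht0.le (sub_add_cancel 1 t))
  rw [add_sub_cancel_left, norm_smul, Real.norm_of_nonneg ht0.le, hseg] at hloc_t
  simp only [smul_eq_mul] at hconv
  nlinarith

end ConvexOn

/-- `sInf (slopeSet φ s r v)` is the inf-convolution of `r * ‖·‖` with the directional derivative
`w ↦ inf_{t > 0} φ (t • w) / t` of `φ` at `0`; it is the sublinear functional fed to Hahn–Banach. -/
def slopeSet (φ : X → ℝ) (s : Set X) (r : ℝ) (v : X) : Set ℝ :=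
  {a | ∃ t > 0, ∃ w, t • w ∈ s ∧ φ (t • w) / t + r * ‖v - w‖ = a}

noncomputable def slopeInfConv (φ : X → ℝ) (s : Set X) (r : ℝ) (v : X) : ℝ :=
  sInf (slopeSet φ s r v)

section SlopeInfConv

variable {s : Set X} {φ : X → ℝ} {r : ℝ}

theorem mul_norm_mem_slopeSet (h0 : (0 : X) ∈ s) (hφ0 : φ 0 = 0) (v : X) :
    r * ‖v‖ ∈ slopeSet φ s r v :=
  ⟨1, one_pos, 0, by simpa using h0, by simp [hφ0]⟩

theorem apply_mem_slopeSet {v : X} (hv : v ∈ s) : φ v ∈ slopeSet φ s r v :=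
  ⟨1, one_pos, v, by simpa using hv, by simp⟩

theorem neg_mul_norm_le_of_mem_slopeSet (hr : 0 ≤ r) (hlow : ∀ y ∈ s, -(r * ‖y‖) ≤ φ y)
    {v : X} {a : ℝ} (ha : a ∈ slopeSet φ s r v) : -(r * ‖v‖) ≤ a := by
  obtain ⟨t, ht, w, hw, rfl⟩ := ha
  have hslope : -(r * ‖w‖) ≤ φ (t • w) / t := by
    have htw := hlow _ hw
    rw [norm_smul, Real.norm_of_nonneg ht.le] at htw
    rw [le_div_iff₀ ht]
    linarith
  nlinarith [mul_le_mul_of_nonneg_left (norm_le_norm_add_norm_sub v w) hr]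

theorem bddBelow_slopeSet (hr : 0 ≤ r) (hlow : ∀ y ∈ s, -(r * ‖y‖) ≤ φ y) (v : X) :
    BddBelow (slopeSet φ s r v) :=
  ⟨_, fun _ ha => neg_mul_norm_le_of_mem_slopeSet hr hlow ha⟩

theorem smul_slopeSet_subset {c : ℝ} (hc : 0 < c) (v : X) :
    c • slopeSet φ s r v ⊆ slopeSet φ s r (c • v) := by
  rintro _ ⟨_, ⟨t, ht, w, hw, rfl⟩, rfl⟩
  have htw : (t / c) • c • w = t • w := by rw [smul_smul, div_mul_cancel₀ _ hc.ne']
  refine ⟨t / c, div_pos ht hc, c • w, htw ▸ hw, ?_⟩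
  rw [htw, ← smul_sub, norm_smul, Real.norm_of_nonneg hc.le]
  simp only [smul_eq_mul]
  field_simp

theorem slopeSet_smul {c : ℝ} (hc : 0 < c) (v : X) :
    slopeSet φ s r (c • v) = c • slopeSet φ s r v := by
  refine Subset.antisymm ?_ (smul_slopeSet_subset hc v)
  calc slopeSet φ s r (c • v) = c • c⁻¹ • slopeSet φ s r (c • v) := by
        rw [smul_smul, mul_inv_cancel₀ hc.ne', one_smul]
    _ ⊆ c • slopeSet φ s r (c⁻¹ • c • v) :=
        Set.smul_set_mono (smul_slopeSet_subset (inv_pos.2 hc) _)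
    _ = c • slopeSet φ s r v := by rw [inv_smul_smul₀ hc.ne']

theorem slopeInfConv_smul {c : ℝ} (hc : 0 < c) (v : X) :
    slopeInfConv φ s r (c • v) = c * slopeInfConv φ s r v := by
  rw [slopeInfConv, slopeSet_smul hc, Real.sInf_smul_of_nonneg hc.le]
  rfl

/-- Bring both difference quotients to the common step `min t t'` (slopes of a convex function
increase), then use convexity at the midpoint. -/
theorem exists_mem_slopeSet_add_le (hφ : ConvexOn ℝ s φ) (h0 : (0 : X) ∈ s) (hφ0 : φ 0 = 0)
    (hr : 0 ≤ r) {v v' : X} {a b : ℝ} (ha : a ∈ slopeSet φ s r v) (hb : b ∈ slopeSet φ s r v') :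
    ∃ c ∈ slopeSet φ s r (v + v'), c ≤ a + b := by
  obtain ⟨t, ht, w, hw, rfl⟩ := ha
  obtain ⟨t', ht', w', hw', rfl⟩ := hb
  set τ := min t t'
  have hτ : 0 < τ := lt_min ht ht'
  obtain ⟨hτw, hq⟩ := hφ.smul_mem_and_map_smul_div_le h0 hφ0 hτ (min_le_left t t') hw
  obtain ⟨hτw', hq'⟩ := hφ.smul_mem_and_map_smul_div_le h0 hφ0 hτ (min_le_right t t') hw'
  have hmid : (τ / 2) • (w + w') = (1 / 2 : ℝ) • τ • w + (1 / 2 : ℝ) • τ • w' := by module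
  have hhalf : (0 : ℝ) ≤ 1 / 2 := by norm_num
  have hmem := hφ.1 hτw hτw' hhalf hhalf (add_halves 1)
  have hle := hφ.2 hτw hτw' hhalf hhalf (add_halves 1)
  rw [← hmid] at hmem hle
  refine ⟨_, ⟨τ / 2, half_pos hτ, w + w', hmem, rfl⟩, ?_⟩
  have hquot : φ ((τ / 2) • (w + w')) / (τ / 2) ≤ φ (τ • w) / τ + φ (τ • w') / τ := by
    rw [← add_div, div_le_div_iff₀ (half_pos hτ) hτ]
    simp only [smul_eq_mul] at hle
    nlinarith
  have hnorm : ‖v + v' - (w + w')‖ ≤ ‖v - w‖ + ‖v' - w'‖ := by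
    rw [add_sub_add_comm]
    exact norm_add_le _ _
  nlinarith [mul_le_mul_of_nonneg_left hnorm hr]

theorem slopeInfConv_add_le (hφ : ConvexOn ℝ s φ) (h0 : (0 : X) ∈ s) (hφ0 : φ 0 = 0)
    (hr : 0 ≤ r) (hlow : ∀ y ∈ s, -(r * ‖y‖) ≤ φ y) (v v' : X) :
    slopeInfConv φ s r (v + v') ≤ slopeInfConv φ s r v + slopeInfConv φ s r v' := by
  have hne : ∀ v, (slopeSet φ s r v).Nonempty := fun v => ⟨_, mul_norm_mem_slopeSet h0 hφ0 v⟩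
  unfold slopeInfConv
  rw [← csInf_add (hne v) (bddBelow_slopeSet hr hlow v) (hne v') (bddBelow_slopeSet hr hlow v')]
  refine le_csInf ((hne v).add (hne v')) ?_
  rintro _ ⟨a, ha, b, hb, rfl⟩
  obtain ⟨c, hc, hcab⟩ := exists_mem_slopeSet_add_le hφ h0 hφ0 hr ha hb
  exact (csInf_le (bddBelow_slopeSet hr hlow _) hc).trans hcab

end SlopeInfConv

theorem ConvexOn.exists_clm_le_of_neg_mul_norm_le {s : Set X} {φ : X → ℝ} {r : ℝ}
    (hφ : ConvexOn ℝ s φ) (h0 : (0 : X) ∈ s) (hφ0 : φ 0 = 0) (hr : 0 ≤ r)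
    (hlow : ∀ y ∈ s, -(r * ‖y‖) ≤ φ y) :
    ∃ p : X →L[ℝ] ℝ, ‖p‖ ≤ r ∧ ∀ y ∈ s, p y ≤ φ y := by
  have hbdd := bddBelow_slopeSet hr hlow
  have hle_norm (v : X) : slopeInfConv φ s r v ≤ r * ‖v‖ :=
    csInf_le (hbdd v) (mul_norm_mem_slopeSet h0 hφ0 v)
  obtain ⟨g, -, hg⟩ := exists_extension_of_le_sublinear ⟨⊥, 0⟩ (slopeInfConv φ s r)
    (fun c hc v => slopeInfConv_smul hc v) (slopeInfConv_add_le hφ h0 hφ0 hr hlow) <| by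
      rintro ⟨y, hy⟩
      obtain rfl : y = 0 := by simpa using hy
      simpa [slopeInfConv] using le_csInf ⟨_, mul_norm_mem_slopeSet h0 hφ0 0⟩
        fun _ => neg_mul_norm_le_of_mem_slopeSet hr hlow (v := (0 : X))
  have hbound (v : X) : ‖g v‖ ≤ r * ‖v‖ := by
    have hneg := (hg (-v)).trans (hle_norm (-v))
    rw [map_neg, norm_neg] at hneg
    rw [Real.norm_eq_abs, abs_le]
    exact ⟨by linarith, (hg v).trans (hle_norm v)⟩
  exact ⟨g.mkContinuous r hbound, g.mkContinuous_norm_le hr hbound,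
    fun y hy => (hg y).trans (csInf_le (hbdd y) (apply_mem_slopeSet hy))⟩

theorem ConvexOn.exists_subgradient_norm_le_of_eventually {s : Set X} {φ : X → ℝ} {x : X} {r : ℝ}
    (hφ : ConvexOn ℝ s φ) (hx : x ∈ s) (hr : 0 ≤ r)
    (hloc : ∀ᶠ u in 𝓝 x, u ∈ s → φ x - r * ‖u - x‖ ≤ φ u) :
    ∃ p : X →L[ℝ] ℝ, ‖p‖ ≤ r ∧ ∀ u ∈ s, φ x + p (u - x) ≤ φ u := by
  obtain ⟨p, hp, hpφ⟩ := ((hφ.translate_right x).add_const (-φ x)).exists_clm_le_of_neg_mul_norm_le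
    (by simpa using hx) (by simp) hr fun w hw => by
      have hglobal := hφ.sub_mul_norm_le_of_eventually hx hloc hw
      simp only [add_sub_cancel_left] at hglobal
      simp only [Pi.add_apply, Function.comp_apply]
      linarith
  refine ⟨p, hp, fun u hu => ?_⟩
  have hpu := hpφ (u - x) (by simpa using hu)
  simp only [Pi.add_apply, Function.comp_apply, add_sub_cancel] at hpu
  linarith

section EReal

variable {f : X → EReal} {x : X}

theorem convexOn_toReal_of_ereal (hbot : ∀ u, f u ≠ ⊥)
    (hconv : ∀ u v : X, ∀ t : ℝ, 0 ≤ t → t ≤ 1 →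
      f (t • u + (1 - t) • v) ≤ (t : EReal) * f u + ((1 - t : ℝ) : EReal) * f v) :
    ConvexOn ℝ {u | f u ≠ ⊤} fun u => (f u).toReal := by
  have hcombo : ∀ ⦃u⦄, f u ≠ ⊤ → ∀ ⦃v⦄, f v ≠ ⊤ → ∀ ⦃a b : ℝ⦄, 0 ≤ a → 0 ≤ b → a + b = 1 →
      f (a • u + b • v) ≤ ((a * (f u).toReal + b * (f v).toReal : ℝ) : EReal) := by
    intro u hu v hv a b ha hb hab
    obtain rfl : b = 1 - a := by linarith
    have h := hconv u v a ha (by linarith)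
    rw [← EReal.coe_toReal hu (hbot u), ← EReal.coe_toReal hv (hbot v)] at h
    exact_mod_cast h
  refine ⟨fun u hu v hv a b ha hb hab => ?_, fun u hu v hv a b ha hb hab => ?_⟩
  · exact ne_top_of_le_ne_top (EReal.coe_ne_top _) (hcombo hu hv ha hb hab)
  · simpa only [EReal.toReal_coe, smul_eq_mul] using EReal.toReal_le_toReal (hcombo hu hv ha hb hab) (hbot _) (EReal.coe_ne_top _)

theorem mem_frSubdiff_of_forall_le {p : X →L[ℝ] ℝ} (hfin : f x ≠ ⊤)
    (h : ∀ u, f x + ((p (u - x) : ℝ) : EReal) ≤ f u) : p ∈ frSubdiff f x := by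
  refine ⟨hfin, fun ε hε => Eventually.of_forall fun u => le_trans ?_ (h u)⟩
  gcongr
  exact_mod_cast sub_le_self _ (by positivity)

theorem ePlus_div_le_of_le {a : EReal} {c d : ℝ} (hd : 0 < d) (h : a ≤ ((c * d : ℝ) : EReal)) :
    ePlus a / ENNReal.ofReal d ≤ ENNReal.ofReal c := by
  rw [ENNReal.div_le_iff (by simpa using hd) ENNReal.ofReal_ne_top,
    ← ENNReal.ofReal_mul' hd.le, ePlus, if_neg (ne_top_of_le_ne_top (EReal.coe_ne_top _) h)]
  rcases eq_or_ne a ⊥ with rfl | ha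
  · simp
  · exact ENNReal.ofReal_le_ofReal (by simpa only [EReal.toReal_coe] using EReal.toReal_le_toReal h ha (EReal.coe_ne_top _))

theorem lt_of_ePlus_div_lt {a : EReal} {r : ℝ≥0} {d : ℝ} (hd : 0 < d)
    (h : ePlus a / ENNReal.ofReal d < r) : a < ((r * d : ℝ) : EReal) := by
  rw [ENNReal.div_lt_iff (Or.inl (by simpa using hd)) (Or.inl ENNReal.ofReal_ne_top),
    ← ENNReal.ofReal_coe_nnreal, ← ENNReal.ofReal_mul r.coe_nonneg, ePlus] at h
  split_ifs at h with ha
  · simp at h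
  · exact (EReal.le_coe_toReal ha).trans_lt (EReal.coe_lt_coe_iff.2 ((ENNReal.ofReal_lt_ofReal_iff'.1 h).1))

end EReal

section Slopes

variable {f : X → EReal} {x : X}

theorem locSlope_le_nnnorm_of_mem_frSubdiff (hbot : ∀ u, f u ≠ ⊥) {p : X →L[ℝ] ℝ}
    (hp : p ∈ frSubdiff f x) : locSlope f x ≤ ‖p‖₊ := by
  refine ENNReal.le_of_forall_pos_le_add fun ε hε _ => ?_
  calc locSlope f x ≤ ENNReal.ofReal (‖p‖ + ε) := by
        refine limsup_le_of_le (by isBoundedDefault) ?_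
        filter_upwards [hp.2 ε hε, self_mem_nhdsWithin] with u hu hux
        refine ePlus_div_le_of_le (norm_pos_iff.2 (sub_ne_zero.2 hux)) ?_
        by_cases hfu : f u = ⊤
        · rw [hfu, EReal.sub_top]
          exact bot_le
        rw [← EReal.coe_toReal hp.1 (hbot x), ← EReal.coe_toReal hfu (hbot u)] at hu ⊢
        norm_cast at hu ⊢
        have hp_dir : -p (u - x) ≤ ‖p‖ * ‖u - x‖ :=
          (neg_le_abs _).trans ((Real.norm_eq_abs _).symm.le.trans (p.le_opNorm (u - x)))
        linarith
    _ = ‖p‖₊ + ε := by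
        rw [ENNReal.ofReal_add (norm_nonneg p) ε.coe_nonneg, ← coe_nnnorm, ENNReal.ofReal_coe_nnreal,
          ENNReal.ofReal_coe_nnreal]

theorem exists_mem_frSubdiff_nnnorm_le_of_locSlope_lt (hbot : ∀ u, f u ≠ ⊥)
    (hconv : ∀ u v : X, ∀ t : ℝ, 0 ≤ t → t ≤ 1 →
      f (t • u + (1 - t) • v) ≤ (t : EReal) * f u + ((1 - t : ℝ) : EReal) * f v)
    (hfin : f x ≠ ⊤) {r : ℝ≥0} (hr : locSlope f x < r) :
    ∃ p ∈ frSubdiff f x, ‖p‖₊ ≤ r := by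
  have hloc : ∀ᶠ u in 𝓝 x, u ∈ {u | f u ≠ ⊤} → (f x).toReal - r * ‖u - x‖ ≤ (f u).toReal := by
    filter_upwards [eventually_nhdsWithin_iff.1 (eventually_lt_of_limsup_lt hr)] with u hu hfu
    rcases eq_or_ne u x with rfl | hux
    · simp
    have hlt := lt_of_ePlus_div_lt (norm_pos_iff.2 (sub_ne_zero.2 hux)) (hu hux)
    rw [← EReal.coe_toReal hfin (hbot x), ← EReal.coe_toReal hfu (hbot u)] at hlt
    norm_cast at hlt
    linarith
  obtain ⟨p, hp, hsub⟩ := (convexOn_toReal_of_ereal hbot hconv).exists_subgradient_norm_le_of_eventually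
    hfin r.coe_nonneg hloc
  refine ⟨p, mem_frSubdiff_of_forall_le hfin fun u => ?_, NNReal.coe_le_coe.1 hp⟩
  by_cases hfu : f u = ⊤
  · rw [hfu]
    exact le_top
  rw [← EReal.coe_toReal hfin (hbot x), ← EReal.coe_toReal hfu (hbot u)]
  exact_mod_cast hsub u hfu

end Slopes

/-- if `f : X → ℝ ∪ {+∞}` is convex, then `|∇f|(x) = |∂f|(x)` at every point
`x` with `f(x) < +∞`. -/
theorem locSlope_eq_sdSlope_of_convex (f : X → EReal) (hbot : ∀ u, f u ≠ ⊥)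
    (hconv : ∀ u v : X, ∀ t : ℝ, 0 ≤ t → t ≤ 1 →
      f (t • u + (1 - t) • v) ≤ (t : EReal) * f u + ((1 - t : ℝ) : EReal) * f v)
    (x : X) (hfin : f x ≠ ⊤) : locSlope f x = sdSlope f x := by
  refine le_antisymm (le_iInf₂ fun p hp => locSlope_le_nnnorm_of_mem_frSubdiff hbot hp) ?_
  refine le_of_forall_gt_imp_ge_of_dense fun r hr => ?_
  induction r using ENNReal.recTopCoe with
  | top => exact le_top
  | coe r =>
    obtain ⟨p, hp, hpr⟩ := exists_mem_frSubdiff_nnnorm_le_of_locSlope_lt hbot hconv hfin hr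
    exact (iInf₂_le p hp).trans (ENNReal.coe_le_coe.2 hpr)
end

section
/- Let X be a Banach space, f : X → ℝ ∪ {+∞}, and x̄ ∈ X with f(x̄) = 0. If f_+ is lower semicontinuous on a neighbourhood of x̄, then the error bound modulus of f at x̄ equals the uniform strict slope: Er f(x̄) = \overline{|∇f|}^◇(x̄). -/
/-!
For `f x > 0` and `y ∈ S(f)`, the quotient `f(x) / d(x, y)` is one of the quotients whose
supremum is `|∇f|^◇(x)`, whence `Er f(x̄) ≤ \overline{|∇f|}^◇(x̄)`. Conversely, if
`f(x) / d(x, S(f)) < σ` with `x` near `x̄`, Ekeland's variational principle for `f₊` on the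
closed ball of radius `d(x, S(f))` around `x` yields a point `v` in that open ball (so
`f(v) > 0`) with `f(v) ≤ f(x)` at which `f₊ + σ d(·, v)` is minimal; the choice of the radius
extends the minimality to all of `X`, so `|∇f|^◇(v) ≤ σ`.
-/

open Filter Metric Topology ENNReal

variable {X : Type*} [NormedAddCommGroup X] [NormedSpace ℝ X] [CompleteSpace X]

/-- The nonlocal slope `|∇f|^◇(x) := sup_{u≠x} [f(x) − f₊(u)]₊ / d(u,x)`. -/
noncomputable def nlSlope (f : X → EReal) (x : X) : ℝ≥0∞ :=
  ⨆ (u : X) (_ : u ≠ x), ePlus (f x - max (f u) 0) / ENNReal.ofReal (dist u x)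

/-- The uniform strict slope `\overline{|∇f|}^◇(x̄) := liminf_{x→x̄, f(x)↓0} |∇f|^◇(x)`,
realized as the limit (= supremum) as `ρ↓0` of the infimum of `|∇f|^◇(x)` over all `x` with
`‖x−x̄‖ < ρ` and `0 < f(x) < ρ` (infimum of the empty set is `+∞`). -/
noncomputable def uStrictSlope (f : X → EReal) (x₀ : X) : ℝ≥0∞ :=
  ⨆ (ρ : ℝ) (_ : 0 < ρ),
    ⨅ (x : X) (_ : ‖x - x₀‖ < ρ ∧ 0 < f x ∧ f x < (ρ : EReal)), nlSlope f x

/-- The error bound modulus `Er f(x̄) := liminf_{x→x̄, f(x)>0} f(x)/d(x, S(f))`,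
with `S(f) := {x : f(x) ≤ 0}`. -/
noncomputable def erMod (f : X → EReal) (x₀ : X) : ℝ≥0∞ :=
  ⨆ (δ : ℝ) (_ : 0 < δ),
    ⨅ (x : X) (_ : dist x x₀ < δ ∧ 0 < f x),
      ePlus (f x) / EMetric.infEdist x {z | f z ≤ 0}

lemma ePlus_eq_toENNReal (a : EReal) : ePlus a = a.toENNReal := rfl

lemma ePlus_max_zero (a : EReal) : ePlus (max a 0) = ePlus a := by
  rcases le_total a 0 with h | h
  · simp [ePlus_eq_toENNReal, h]
  · rw [max_eq_left h]

lemma ePlus_sub_max_zero (a b : EReal) : ePlus (a - max b 0) = ePlus a - ePlus b := by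
  rw [ePlus_eq_toENNReal, EReal.toENNReal_sub (le_max_right b 0), ← ePlus_eq_toENNReal,
    ← ePlus_eq_toENNReal, ePlus_max_zero]

lemma lt_coe_of_ePlus_lt {a : EReal} {ρ : ℝ} (h : ePlus a < ENNReal.ofReal ρ) : a < ρ := by
  by_contra! h'
  exact h.not_ge (EReal.toENNReal_le_toENNReal h')

lemma LowerSemicontinuousOn.ePlus_of_max_zero {α : Type*} [TopologicalSpace α] {f : α → EReal}
    {s : Set α} (hf : LowerSemicontinuousOn (fun u => max (f u) 0) s) :
    LowerSemicontinuousOn (fun u => ePlus (f u)) s := by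
  simpa only [Function.comp_def, ← ePlus_eq_toENNReal, ePlus_max_zero] using
    EReal.continuous_toENNReal.comp_lowerSemicontinuousOn hf
      fun _ _ => EReal.toENNReal_le_toENNReal

section Ekeland

variable {Y : Type*} [EMetricSpace Y] {g : Y → ℝ≥0∞} {c : ℝ≥0∞} {u w : Y}

def ekelandSet (g : Y → ℝ≥0∞) (c : ℝ≥0∞) (w : Y) : Set Y := {u | g u + c * edist u w ≤ g w}

lemma self_mem_ekelandSet (w : Y) : w ∈ ekelandSet g c w := by simp [ekelandSet]

lemma le_of_mem_ekelandSet (h : u ∈ ekelandSet g c w) : g u ≤ g w := le_self_add.trans h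

lemma ekelandSet_subset (h : u ∈ ekelandSet g c w) : ekelandSet g c u ⊆ ekelandSet g c w :=
  fun t ht => calc
    g t + c * edist t w ≤ g t + c * edist t u + c * edist u w := by
      rw [add_assoc, ← mul_add]; gcongr; exact edist_triangle _ _ _
    _ ≤ g w := (add_le_add ht le_rfl).trans h

lemma isClosed_ekelandSet (hg : LowerSemicontinuous g) (hc : c ≠ ⊤) (w : Y) :
    IsClosed (ekelandSet g c w) := by
  have hdist : Continuous fun u => c * edist u w :=
    (ENNReal.continuous_const_mul hc).comp (continuous_id.edist continuous_const)
  exact (hg.add hdist.lowerSemicontinuous).isClosed_preimage (g w)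

-- An almost minimizer `u` of `g` on `ekelandSet g c w` leaves little room in `ekelandSet g c u`.
lemma exists_mem_ekelandSet_forall_edist_le (hw : g w ≠ ⊤) (hc₀ : c ≠ 0) (hc : c ≠ ⊤)
    {δ : ℝ≥0∞} (hδ : δ ≠ 0) : ∃ u ∈ ekelandSet g c w, ∀ t ∈ ekelandSet g c u, edist t u ≤ δ := by
  set m := ⨅ t ∈ ekelandSet g c w, g t
  have hm : m ≠ ⊤ := ne_top_of_le_ne_top hw (iInf₂_le w (self_mem_ekelandSet w))
  obtain ⟨u, hu⟩ := iInf_lt_iff.mp (ENNReal.lt_add_right hm (mul_ne_zero hc₀ hδ))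
  obtain ⟨hu, hgu⟩ := iInf_lt_iff.mp hu
  refine ⟨u, hu, fun t ht => ?_⟩
  have hgt : g t ≠ ⊤ := ne_top_of_le_ne_top hw (le_of_mem_ekelandSet (ekelandSet_subset hu ht))
  have hmt : m ≤ g t := iInf₂_le t (ekelandSet_subset hu ht)
  have : g t + c * edist t u < g t + c * δ := ht.trans_lt (hgu.trans_le (by gcongr))
  exact ((ENNReal.mul_lt_mul_iff_right hc₀ hc).mp ((ENNReal.add_lt_add_iff_left hgt).mp this)).le

theorem ekeland_variational_principle [CompleteSpace Y] (hg : LowerSemicontinuous g) {x : Y}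
    (hx : g x ≠ ⊤) (hc₀ : c ≠ 0) (hc : c ≠ ⊤) :
    ∃ v, g v + c * edist v x ≤ g x ∧ ∀ u, g v ≤ g u + c * edist u v := by
  choose step hstep using fun (n : ℕ) (w : {w // g w ≠ ⊤}) =>
    exists_mem_ekelandSet_forall_edist_le w.2 hc₀ hc (δ := 2⁻¹ ^ n) (by simp)
  let seq : ℕ → {w // g w ≠ ⊤} := fun n => Nat.rec ⟨x, hx⟩
    (fun n w => ⟨step n w, ne_top_of_le_ne_top w.2 (le_of_mem_ekelandSet (hstep n w).1)⟩) n
  set E : ℕ → Set Y := fun n => ekelandSet g c (seq n).1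
  have hE : Antitone E := antitone_nat_of_succ_le fun n => ekelandSet_subset (hstep n (seq n)).1
  have hsmall : ∀ n, ∀ t ∈ E (n + 1), edist t (seq (n + 1)).1 ≤ 2⁻¹ ^ n :=
    fun n => (hstep n (seq n)).2
  have hlim : Tendsto (fun n : ℕ => (2⁻¹ : ℝ≥0∞) ^ n) atTop (𝓝 0) :=
    ENNReal.tendsto_pow_atTop_nhds_zero_of_lt_one (by norm_num)
  have htendsto : ∀ u, (∀ n, u ∈ E n) → Tendsto (fun n => (seq (n + 1)).1) atTop (𝓝 u) := by
    intro u hu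
    refine tendsto_iff_edist_tendsto_0.2 <| tendsto_of_tendsto_of_tendsto_of_le_of_le
      tendsto_const_nhds hlim (fun _ => zero_le) fun n => ?_
    rw [edist_comm]; exact hsmall n u (hu (n + 1))
  have hC : CauchySeq fun n => (seq (n + 1)).1 := by
    refine cauchySeq_of_edist_le_geometric 2⁻¹ 1 (by norm_num) one_ne_top fun n => ?_
    rw [one_mul, edist_comm]
    exact hsmall n _ (hstep (n + 1) (seq (n + 1))).1
  obtain ⟨v, hv⟩ := cauchySeq_tendsto_of_complete hC
  have hvE : ∀ n, v ∈ E n := fun n =>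
    (isClosed_ekelandSet hg hc _).mem_of_tendsto hv
      (eventually_atTop.2 ⟨n, fun m hm => hE hm (hstep m (seq m)).1⟩)
  refine ⟨v, hvE 0, fun u => ?_⟩
  by_contra! h
  have huE : ∀ n, u ∈ E n := fun n => ekelandSet_subset (hvE n) h.le
  have : u = v := tendsto_nhds_unique (htendsto u huE) hv
  simp [this] at h

end Ekeland

section Slopes

variable {E : Type*} [NormedAddCommGroup E]

lemma nlSlope_eq (f : E → EReal) (x : E) :
    nlSlope f x = ⨆ (u : E) (_ : u ≠ x), (ePlus (f x) - ePlus (f u)) / edist u x := by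
  simp only [nlSlope, ePlus_sub_max_zero, edist_dist]

lemma ePlus_div_infEDist_le_nlSlope {f : E → EReal} {x : E} (hx : 0 < f x) :
    ePlus (f x) / infEDist x {z | f z ≤ 0} ≤ nlSlope f x := by
  simp only [infEDist, div_eq_mul_inv, ENNReal.inv_iInf, ENNReal.mul_iSup]
  refine iSup₂_le fun y hy => ?_
  have hyx : y ≠ x := by rintro rfl; exact hy.not_gt hx
  rw [nlSlope_eq]
  refine le_iSup₂_of_le y hyx ?_
  rw [ePlus_eq_toENNReal (f y), EReal.toENNReal_of_nonpos hy, tsub_zero, edist_comm,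
    div_eq_mul_inv]

lemma nlSlope_le_of_forall {f : E → EReal} {v : E} {σ : ℝ≥0∞}
    (h : ∀ u, ePlus (f v) ≤ ePlus (f u) + σ * edist u v) : nlSlope f v ≤ σ := by
  rw [nlSlope_eq]
  exact iSup₂_le fun u _ => ENNReal.div_le_of_le_mul (tsub_le_iff_left.mpr (h u))

lemma exists_nlSlope_le [CompleteSpace E] {f : E → EReal} {x : E} {σ : ℝ≥0∞} (hσ : σ ≠ ⊤)
    (hfx : ePlus (f x) < σ * infEDist x {z | f z ≤ 0})
    (hlsc : LowerSemicontinuousOn (fun u => ePlus (f u))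
      (closedEBall x (infEDist x {z | f z ≤ 0}))) :
    ∃ v, edist v x < infEDist x {z | f z ≤ 0} ∧ 0 < f v ∧
      ePlus (f v) ≤ ePlus (f x) ∧ nlSlope f v ≤ σ := by
  set I := infEDist x {z | f z ≤ 0}
  set B := closedEBall x I
  have hσ₀ : σ ≠ 0 := by rintro rfl; simp at hfx
  have : CompleteSpace B := isClosed_closedEBall.completeSpace_coe
  obtain ⟨v, hvx, hvmin⟩ := ekeland_variational_principle (g := fun u : B => ePlus (f u))
    (lowerSemicontinuous_restrict_iff.mpr hlsc) (x := ⟨x, mem_closedEBall_self⟩)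
    hfx.ne_top hσ₀ hσ
  have hvx' : ePlus (f v) + σ * edist (v : E) x < σ * I := hvx.trans_lt hfx
  have hvI : edist (v : E) x < I :=
    (ENNReal.mul_lt_mul_iff_right hσ₀ hσ).mp (le_add_self.trans_lt hvx')
  have hfv : 0 < f v := by
    by_contra! h
    exact hvI.not_ge (edist_comm x (v : E) ▸ infEDist_le_edist_of_mem h)
  refine ⟨v, hvI, hfv, le_self_add.trans hvx, nlSlope_le_of_forall fun u => ?_⟩
  by_cases hu : u ∈ B
  · exact hvmin ⟨u, hu⟩
  refine le_add_left (ENNReal.le_of_add_le_add_right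
    (ENNReal.mul_ne_top hσ (edist_ne_top (v : E) x)) ?_)
  calc ePlus (f v) + σ * edist (v : E) x ≤ σ * I := hvx'.le
    _ ≤ σ * edist u x := by gcongr; exact (not_le.mp hu).le
    _ ≤ σ * edist u v + σ * edist (v : E) x := by
      rw [← mul_add]; gcongr; exact edist_triangle _ _ _

lemma erMod_le_uStrictSlope (f : E → EReal) (x₀ : E) : erMod f x₀ ≤ uStrictSlope f x₀ :=
  iSup₂_mono fun _ _ => le_iInf₂ fun x ⟨_, hxf, _⟩ =>
    iInf₂_le_of_le x ⟨by rwa [dist_eq_norm], hxf⟩ (ePlus_div_infEDist_le_nlSlope hxf)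

lemma uStrictSlope_le_erMod [CompleteSpace E] {f : E → EReal} {x₀ : E} (hx₀ : f x₀ = 0)
    (hlsc : ∃ U ∈ 𝓝 x₀, LowerSemicontinuousOn (fun u => max (f u) 0) U) :
    uStrictSlope f x₀ ≤ erMod f x₀ := by
  refine le_of_forall_gt_imp_ge_of_dense fun σ hσ => ?_
  rcases eq_or_ne σ ⊤ with rfl | hσtop
  · exact le_top
  refine iSup₂_le fun ρ hρ => ?_
  obtain ⟨U, hU, hlscU⟩ := hlsc
  obtain ⟨η, hη, hηU⟩ := Metric.mem_nhds_iff.mp hU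
  have hσ_cont : Continuous fun δ : ℝ => σ * ENNReal.ofReal δ :=
    (ENNReal.continuous_const_mul hσtop).comp ENNReal.continuous_ofReal
  have hsmall : ∀ᶠ δ in 𝓝 (0 : ℝ), 2 * δ < min ρ η ∧ σ * ENNReal.ofReal δ < ENNReal.ofReal ρ := by
    refine ((Continuous.tendsto (by fun_prop) 0).eventually (gt_mem_nhds ?_)).and
      ((hσ_cont.tendsto 0).eventually (gt_mem_nhds ?_))
    · simpa using lt_min hρ hη
    · simpa using hρ
  obtain ⟨δ, ⟨hδρη, hσδ⟩, hδ⟩ := ((hsmall.filter_mono nhdsWithin_le_nhds).and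
    (self_mem_nhdsWithin (s := Set.Ioi 0))).exists
  unfold erMod at hσ
  obtain ⟨x, ⟨hxx₀, hxf⟩, hxσ⟩ : ∃ x, (dist x x₀ < δ ∧ 0 < f x) ∧
      ePlus (f x) / infEDist x {z | f z ≤ 0} < σ := by
    have := (le_iSup₂ δ hδ).trans_lt hσ
    simp only [iInf_lt_iff, exists_prop] at this
    exact this
  set I := infEDist x {z | f z ≤ 0}
  have hIx₀ : I ≤ edist x x₀ := infEDist_le_edist_of_mem hx₀.le
  have hfxI : ePlus (f x) < σ * I :=
    (ENNReal.div_lt_iff (Or.inr (EReal.toENNReal_ne_zero_iff.mpr hxf))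
      (Or.inl (ne_top_of_le_ne_top (edist_ne_top _ _) hIx₀))).mp hxσ
  have hnear : ∀ u, edist u x ≤ I → dist u x₀ < min ρ η := fun u hu => by
    have := (edist_le_ofReal dist_nonneg).mp (hu.trans (hIx₀.trans_eq (edist_dist x x₀)))
    linarith [dist_triangle u x x₀]
  obtain ⟨v, hvx, hvf, hvfx, hvσ⟩ := exists_nlSlope_le hσtop hfxI
    (hlscU.ePlus_of_max_zero.mono fun u hu => hηU ((hnear u hu).trans_le (min_le_right ρ η)))
  have hvρ : f v < ρ := lt_coe_of_ePlus_lt <| calc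
    ePlus (f v) ≤ ePlus (f x) := hvfx
    _ < σ * I := hfxI
    _ ≤ σ * ENNReal.ofReal δ := by
      gcongr; exact hIx₀.trans ((edist_le_ofReal (le_of_lt hδ)).mpr hxx₀.le)
    _ < ENNReal.ofReal ρ := hσδ
  refine iInf₂_le_of_le v ⟨?_, hvf, hvρ⟩ hvσ
  rw [← dist_eq_norm]
  exact (hnear v hvx.le).trans_le (min_le_left ρ η)

end Slopes

theorem erMod_eq_uStrictSlope_general (f : X → EReal) (x₀ : X)
    (hx₀ : f x₀ = 0)
    (hlsc : ∃ U ∈ 𝓝 x₀, LowerSemicontinuousOn (fun u => max (f u) 0) U) :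
    erMod f x₀ = uStrictSlope f x₀ :=
  (erMod_le_uStrictSlope f x₀).antisymm (uStrictSlope_le_erMod hx₀ hlsc)

/-- if `X` is a Banach space and `f₊` is lower semicontinuous on a
neighbourhood of `x̄`, then `Er f(x̄) = \overline{|∇f|}^◇(x̄)`. -/
theorem erMod_eq_uStrictSlope (f : X → EReal) (x₀ : X)
    (hbot : ∀ u, f u ≠ ⊥) (hx₀ : f x₀ = 0)
    (hlsc : ∃ U ∈ 𝓝 x₀, LowerSemicontinuousOn (fun u => max (f u) 0) U) :
    erMod f x₀ = uStrictSlope f x₀ :=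
  erMod_eq_uStrictSlope_general f x₀ hx₀ hlsc
end
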